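/- arXiv:2210.00977 — 5 statements merged into one kernel-verified Lean document; each statement's English description precedes it below -/
import Mathlib

section
/- For any integer d ≥ 1, any integer k ≥ 1, and any real numbers x_1, ..., x_k, the complete homogeneous symmetric polynomial of even degree 2d satisfies h_{2d}(x_1, ..., x_k) ≥ h_{2d}(x̄, ..., x̄) = C(k + 2d - 1, 2d) · x̄^{2d}, where x̄ = (x_1 + ... + x_k)/k. -/
/-!
Let `t₁, …, t_k` be independent standard exponential variables. Since `E[tⁿ] = n!`, the
multinomial theorem gives `m! · h_m(x) = E[(t₁ x₁ + ⋯ + t_k x_k)^m]`. For even `m` the integrand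
is a convex function of `x`, hence so is `h_m`. As `h_m` is also symmetric and the constant vector
at the mean is the average of the `k` cyclic shifts of `x`, Jensen's inequality bounds `h_m(x)`
from below by its value at the mean.
-/

/-- The complete homogeneous symmetric polynomial of degree `d` in `k` real variables. -/
noncomputable def hSym (k d : ℕ) (x : Fin k → ℝ) : ℝ :=
  ∑ ℓ ∈ Finset.Nat.antidiagonalTuple k d, ∏ i, x i ^ ℓ i

open MeasureTheory Real Finset Nat

lemma card_antidiagonalTuple (k n : ℕ) :
    #(Finset.Nat.antidiagonalTuple k n) = (k + n - 1).choose n := by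
  rw [card_eq_of_equiv_fintype
    ((Equiv.subtypeEquivRight fun _ => Finset.Nat.mem_antidiagonalTuple).trans
      (Sym.equivNatSumOfFintype (Fin k) n).symm), Sym.card_sym_eq_choose, Fintype.card_fin]

lemma hSym_const (k m : ℕ) (c : ℝ) :
    hSym k m (fun _ => c) = ((k + m - 1).choose m : ℝ) * c ^ m := by
  rw [hSym, ← card_antidiagonalTuple, ← nsmul_eq_mul, ← sum_const]
  refine sum_congr rfl fun ℓ hℓ => ?_
  rw [prod_pow_eq_pow_sum, Finset.Nat.mem_antidiagonalTuple.mp hℓ]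

lemma hSym_comp_perm (k m : ℕ) (x : Fin k → ℝ) (σ : Equiv.Perm (Fin k)) :
    hSym k m (x ∘ σ) = hSym k m x := by
  refine sum_nbij' (· ∘ σ.symm) (· ∘ σ) ?_ ?_ ?_ ?_ fun ℓ _ => by
    simpa only [Function.comp_apply, Equiv.symm_apply_apply] using Equiv.prod_comp σ fun j => x j ^ ℓ (σ.symm j)
  all_goals simp [Finset.Nat.mem_antidiagonalTuple, Function.comp_def, Equiv.sum_comp]

noncomputable def expDistrib : Measure ℝ :=
  (volume.restrict (Set.Ioi 0)).withDensity fun t => ENNReal.ofReal (exp (-t))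

instance : SigmaFinite expDistrib := SigmaFinite.withDensity_ofReal _

lemma integral_pow_expDistrib (n : ℕ) : ∫ t, t ^ n ∂expDistrib = n ! := by
  rw [expDistrib, integral_withDensity_eq_integral_toReal_smul (by fun_prop) (by simp)]
  have hGamma := Real.Gamma_eq_integral (s := n + 1) (by positivity)
  simp only [Real.Gamma_nat_eq_factorial, add_sub_cancel_right, Real.rpow_natCast] at hGamma
  rw [hGamma]
  refine setIntegral_congr_fun measurableSet_Ioi fun t _ => ?_
  simp [(exp_pos _).le]

lemma integrable_pow_expDistrib (n : ℕ) : Integrable (fun t => t ^ n) expDistrib :=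
  .of_integral_ne_zero (by rw [integral_pow_expDistrib]; positivity)

section MomentRepresentation

variable {k : ℕ}

lemma integrable_prod_pow (ℓ : Fin k → ℕ) :
    Integrable (fun t => ∏ i, t i ^ ℓ i) (Measure.pi fun _ => expDistrib) :=
  Integrable.fintype_prod fun i => integrable_pow_expDistrib (ℓ i)

lemma integral_prod_pow (ℓ : Fin k → ℕ) :
    ∫ t, ∏ i, t i ^ ℓ i ∂(Measure.pi fun _ => expDistrib) = ∏ i, ((ℓ i)! : ℝ) := by
  rw [integral_fintype_prod_eq_prod (fun i t => t ^ ℓ i)]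
  simp only [integral_pow_expDistrib]

lemma sum_mul_pow_eq_sum_antidiagonalTuple (m : ℕ) (x t : Fin k → ℝ) :
    (∑ i, t i * x i) ^ m = ∑ ℓ ∈ Finset.Nat.antidiagonalTuple k m,
      (multinomial univ ℓ * ∏ i, x i ^ ℓ i) * ∏ i, t i ^ ℓ i := by
  rw [sum_pow_eq_sum_piAntidiag, piAntidiag_univ_fin_eq_antidiagonalTuple]
  refine sum_congr rfl fun ℓ _ => ?_
  simp_rw [mul_pow, prod_mul_distrib]
  ring

lemma integrable_sum_mul_pow (m : ℕ) (x : Fin k → ℝ) :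
    Integrable (fun t => (∑ i, t i * x i) ^ m) (Measure.pi fun _ => expDistrib) := by
  simp_rw [sum_mul_pow_eq_sum_antidiagonalTuple]
  exact integrable_finsetSum _ fun ℓ _ => (integrable_prod_pow ℓ).const_mul _

lemma integral_sum_mul_pow (m : ℕ) (x : Fin k → ℝ) :
    ∫ t, (∑ i, t i * x i) ^ m ∂(Measure.pi fun _ => expDistrib) = m ! * hSym k m x := by
  simp_rw [sum_mul_pow_eq_sum_antidiagonalTuple]
  rw [integral_finsetSum _ fun ℓ _ => (integrable_prod_pow ℓ).const_mul _, hSym, mul_sum]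
  refine sum_congr rfl fun ℓ hℓ => ?_
  rw [integral_const_mul, integral_prod_pow, ← Finset.Nat.mem_antidiagonalTuple.mp hℓ,
    ← multinomial_spec]
  push_cast
  ring

end MomentRepresentation

theorem convexOn_hSym {m : ℕ} (hm : Even m) (k : ℕ) : ConvexOn ℝ Set.univ (hSym k m) := by
  refine ⟨convex_univ, fun x _ y _ a b ha hb hab => ?_⟩
  have hpow (t : Fin k → ℝ) : (∑ i, t i * (a • x + b • y) i) ^ m ≤
      a * (∑ i, t i * x i) ^ m + b * (∑ i, t i * y i) ^ m := by
    have hlin : ∑ i, t i * (a • x + b • y) i = a * ∑ i, t i * x i + b * ∑ i, t i * y i := by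
      simp only [Pi.add_apply, Pi.smul_apply, smul_eq_mul, mul_sum, ← sum_add_distrib]
      exact sum_congr rfl fun i _ => by ring
    rw [hlin]
    simpa only [smul_eq_mul] using hm.convexOn_pow.2 trivial trivial ha hb hab
  have hx := (integrable_sum_mul_pow m x).const_mul a
  have hy := (integrable_sum_mul_pow m y).const_mul b
  refine le_of_mul_le_mul_left ?_ (by positivity : (0 : ℝ) < m !)
  calc m ! * hSym k m (a • x + b • y)
      = ∫ t, (∑ i, t i * (a • x + b • y) i) ^ m ∂(Measure.pi fun _ => expDistrib) :=
        (integral_sum_mul_pow m _).symm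
    _ ≤ ∫ t, a * (∑ i, t i * x i) ^ m + b * (∑ i, t i * y i) ^ m
          ∂(Measure.pi fun _ => expDistrib) :=
        integral_mono (integrable_sum_mul_pow m _) (hx.add hy) hpow
    _ = m ! * (a • hSym k m x + b • hSym k m y) := by
        rw [integral_add hx hy, integral_const_mul, integral_const_mul, integral_sum_mul_pow,
          integral_sum_mul_pow, smul_eq_mul, smul_eq_mul]
        ring

section Mean

variable {k : ℕ} [NeZero k]

lemma const_mean_eq_sum_smul_comp_addRight (x : Fin k → ℝ) :
    (fun _ => (∑ i, x i) / k) = ∑ j, (k : ℝ)⁻¹ • (x ∘ Equiv.addRight j) := by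
  ext i
  simp only [Finset.sum_apply, Pi.smul_apply, Function.comp_apply, Equiv.coe_addRight,
    smul_eq_mul, ← mul_sum]
  rw [Fintype.sum_equiv (Equiv.addLeft i) (fun j => x (i + j)) x fun _ => rfl, div_eq_inv_mul]

theorem ConvexOn.map_const_mean_le {f : (Fin k → ℝ) → ℝ} (hf : ConvexOn ℝ Set.univ f)
    (hf_perm : ∀ x (σ : Equiv.Perm (Fin k)), f (x ∘ σ) = f x) (x : Fin k → ℝ) :
    f (fun _ => (∑ i, x i) / k) ≤ f x :=
  calc f (fun _ => (∑ i, x i) / k) = f (∑ j, (k : ℝ)⁻¹ • (x ∘ Equiv.addRight j)) := by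
        rw [const_mean_eq_sum_smul_comp_addRight]
    _ ≤ ∑ j, (k : ℝ)⁻¹ • f (x ∘ Equiv.addRight j) :=
        hf.map_sum_le (fun _ _ => by positivity) (by simp) fun _ _ => trivial
    _ = f x := by
        simp only [hf_perm, smul_eq_mul, sum_const, Finset.card_fin, nsmul_eq_mul]
        exact mul_inv_cancel_left₀ ((Nat.cast_ne_zero (R := ℝ)).mpr (NeZero.ne k)) _

end Mean

theorem hSym_even_ge_mean_general (d k : ℕ) (hk : 1 ≤ k) (x : Fin k → ℝ) :
    hSym k (2 * d) x ≥ hSym k (2 * d) (fun _ => (∑ i, x i) / k) ∧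
    hSym k (2 * d) (fun _ => (∑ i, x i) / k) =
      (Nat.choose (k + 2 * d - 1) (2 * d) : ℝ) * ((∑ i, x i) / k) ^ (2 * d) := by
  have : NeZero k := ⟨by omega⟩
  exact ⟨(convexOn_hSym (even_two_mul d) k).map_const_mean_le (hSym_comp_perm k _) x,
    hSym_const k _ _⟩

theorem hSym_even_ge_mean (d k : ℕ) (hd : 1 ≤ d) (hk : 1 ≤ k) (x : Fin k → ℝ) :
    hSym k (2 * d) x ≥ hSym k (2 * d) (fun _ => (∑ i, x i) / k) ∧
    hSym k (2 * d) (fun _ => (∑ i, x i) / k) =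
      (Nat.choose (k + 2 * d - 1) (2 * d) : ℝ) * ((∑ i, x i) / k) ^ (2 * d) :=
  hSym_even_ge_mean_general d k hk x
end

section
/- For any integer d ≥ 1, any integer k ≥ 1, and any real numbers x_1, ..., x_k, the complete homogeneous symmetric polynomial of even degree satisfies h_{2d}(x_1, ..., x_k) ≥ 0 (Hunter's theorem). -/
open MeasureTheory ProbabilityTheory Real Set
open scoped Nat

lemma integral_expMeasure_eq_setIntegral {r : ℝ} (hr : 0 ≤ r) (g : ℝ → ℝ) :
    ∫ t, g t ∂expMeasure r = ∫ t in Ioi 0, r * exp (-(r * t)) * g t := by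
  have hdens : ∀ t, (gammaPDF 1 r t).toReal • g t
      = (Ici 0).indicator (fun t => r * exp (-(r * t)) * g t) t := by
    intro t
    by_cases ht : 0 ≤ t
    · simp [gammaPDF, gammaPDFReal, ht, ENNReal.toReal_ofReal, hr, (exp_pos _).le]
    · simp [gammaPDF, gammaPDFReal, ht]
  rw [expMeasure, gammaMeasure, integral_withDensity_eq_integral_toReal_smul (f := gammaPDF 1 r)
    (measurable_gammaPDFReal 1 r).ennreal_ofReal (.of_forall fun _ => ENNReal.ofReal_lt_top)]
  simp_rw [hdens]
  rw [integral_indicator measurableSet_Ici, integral_Ici_eq_integral_Ioi]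

lemma integral_pow_expMeasure {r : ℝ} (hr : 0 < r) (n : ℕ) :
    ∫ t, t ^ n ∂expMeasure r = n ! / r ^ n := by
  have hGamma := integral_rpow_mul_exp_neg_mul_Ioi (a := n + 1) (by positivity) hr
  rw [add_sub_cancel_right, Gamma_nat_eq_factorial, ← Nat.cast_succ, rpow_natCast] at hGamma
  simp_rw [rpow_natCast] at hGamma
  calc ∫ t, t ^ n ∂expMeasure r = r * ∫ t in Ioi 0, t ^ n * exp (-(r * t)) := by
        rw [integral_expMeasure_eq_setIntegral hr.le, ← integral_const_mul]
        congr with t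
        ring
    _ = n ! / r ^ n := by
        rw [hGamma, pow_succ, one_div, inv_pow]
        field_simp

lemma integrable_pow_expMeasure {r : ℝ} (hr : 0 < r) (n : ℕ) :
    Integrable (fun t => t ^ n) (expMeasure r) :=
  .of_integral_ne_zero <| by rw [integral_pow_expMeasure hr]; positivity

open Finset

section

variable {ι : Type*} [Fintype ι] {r : ℝ}

lemma integrable_prod_pow_pi_expMeasure (hr : 0 < r) (ℓ : ι → ℕ) :
    Integrable (fun t : ι → ℝ => ∏ i, t i ^ ℓ i) (Measure.pi fun _ => expMeasure r) :=
  have := isProbabilityMeasure_expMeasure hr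
  .fintype_prod (f := fun i t => t ^ ℓ i) fun i => integrable_pow_expMeasure hr (ℓ i)

lemma integral_prod_pow_pi_expMeasure (hr : 0 < r) (ℓ : ι → ℕ) :
    ∫ t : ι → ℝ, ∏ i, t i ^ ℓ i ∂Measure.pi (fun _ => expMeasure r)
      = (∏ i, ((ℓ i)! : ℝ)) / r ^ ∑ i, ℓ i := by
  have := isProbabilityMeasure_expMeasure hr
  rw [integral_fintype_prod_eq_prod (f := fun i t => t ^ ℓ i), ← prod_pow_eq_pow_sum,
    ← prod_div_distrib]
  exact prod_congr rfl fun i _ => integral_pow_expMeasure hr (ℓ i)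

end

lemma integral_sum_mul_pow_pi_expMeasure {r : ℝ} (hr : 0 < r) {k : ℕ} (x : Fin k → ℝ) (n : ℕ) :
    ∫ t : Fin k → ℝ, (∑ i, x i * t i) ^ n ∂Measure.pi (fun _ => expMeasure r)
      = n ! / r ^ n * hSym k n x := by
  have expand : ∀ t : Fin k → ℝ, (∑ i, x i * t i) ^ n = ∑ ℓ ∈ piAntidiag univ n,
      (Nat.multinomial univ ℓ * ∏ i, x i ^ ℓ i) * ∏ i, t i ^ ℓ i := fun t => by
    simp_rw [sum_pow_eq_sum_piAntidiag, mul_pow, prod_mul_distrib, mul_assoc]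
  simp_rw [expand]
  rw [integral_finsetSum _ fun ℓ _ => (integrable_prod_pow_pi_expMeasure hr ℓ).const_mul _,
    hSym, ← piAntidiag_univ_fin_eq_antidiagonalTuple, mul_sum]
  refine sum_congr rfl fun ℓ hℓ => ?_
  have hℓn : ∑ i, ℓ i = n := (mem_piAntidiag.1 hℓ).1
  rw [integral_const_mul, integral_prod_pow_pi_expMeasure hr, ← hℓn,
    ← Nat.multinomial_spec univ ℓ]
  push_cast
  field_simp

theorem hSym_even_nonneg_general (d k : ℕ) (x : Fin k → ℝ) :
    0 ≤ hSym k (2 * d) x := by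
  have hmoment := integral_sum_mul_pow_pi_expMeasure one_pos x (2 * d)
  rw [one_pow, div_one] at hmoment
  refine nonneg_of_mul_nonneg_right ?_ (Nat.cast_pos.2 (2 * d).factorial_pos)
  exact hmoment ▸ integral_nonneg fun t => (even_two_mul d).pow_nonneg _

/-- Hunter's theorem: complete homogeneous symmetric polynomials of even degree
are nonnegative. -/
theorem hSym_even_nonneg (d k : ℕ) (hd : 1 ≤ d) (hk : 1 ≤ k) (x : Fin k → ℝ) :
    0 ≤ hSym k (2 * d) x :=
  hSym_even_nonneg_general d k x
end

section
/- Let X be a real-valued random variable taking finitely many values, with all moments finite, and let m and d be integers with 1 ≤ d ≤ m/2. Let X_1, ..., X_{m-2d+1} be i.i.d. copies of X. Then E[h_{2d}(X_1, ..., X_{m-2d+1})] ≥ C(m, 2d) · (E[X])^{2d}. -/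
/-!
With `G(s) = ∏_{x ∈ s} (1 - xX)⁻¹ = ∑ₙ hₙ(s) Xⁿ`, clearing denominators shows that for
`x + y = u + v`

  `h_{n+2}(x, y, s) - h_{n+2}(u, v, s) = (uv - xy) · hₙ(x, y, u, v, s)`.

The bound below, proved by induction on `d`, gives `h_{2d} ≥ 0`; so moving two entries towards
each other with fixed sum lowers `h_{2d+2}`. Replacing an entry below the mean `x̄` and one above it by `x̄` and their remaining sum
fixes one more entry at `x̄`; hence `h_{2d}(s) ≥ h_{2d}(x̄, …, x̄) = C(2d + k - 1, 2d) x̄^{2d}`.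
Averaging this over the i.i.d. sample and applying Jensen to `t ↦ t^{2d}` gives the theorem.
-/

open PowerSeries Finset

section Series

variable {R : Type*} [CommRing R]

noncomputable def geomSeries (x : R) : R⟦X⟧ := mk (x ^ ·)

theorem one_sub_C_mul_X_mul_geomSeries (x : R) : (1 - C x * X) * geomSeries x = 1 := by
  have := congrArg (rescale x) (mk_one_mul_one_sub_eq_one (S := R))
  simpa [geomSeries, rescale_mk, rescale_X, mul_comm] using this

noncomputable def hsymmSeries (s : Multiset R) : R⟦X⟧ := (s.map geomSeries).prod

theorem coeff_zero_hsymmSeries (s : Multiset R) : coeff 0 (hsymmSeries s) = 1 := by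
  simp [hsymmSeries, coeff_zero_eq_constantCoeff_apply, map_multiset_prod, Function.comp_def,
    geomSeries]

theorem coeff_hsymmSeries_replicate (k n : ℕ) (c : R) :
    coeff n (hsymmSeries (Multiset.replicate k c)) = (n + k - 1).choose n * c ^ n := by
  rcases k with _ | k
  · rcases n with _ | n <;> simp [hsymmSeries, coeff_one]
  · have : geomSeries c = rescale c (mk 1) := by simp [geomSeries, rescale_mk]
    rw [hsymmSeries, Multiset.map_replicate, Multiset.prod_replicate, this, ← map_pow,
      mk_one_pow_eq_mk_choose_add, coeff_rescale, coeff_mk, ← add_assoc, add_tsub_cancel_right,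
      add_comm k, Nat.choose_symm_add, mul_comm]

theorem coeff_hsymmSeries_map_eq_sum_antidiagonalTuple (k n : ℕ) (x : Fin k → R) :
    coeff n (hsymmSeries (univ.val.map x)) =
      ∑ ℓ ∈ Finset.Nat.antidiagonalTuple k n, ∏ i, x i ^ ℓ i := by
  classical
  rw [hsymmSeries, Multiset.map_map, ← Finset.prod_eq_multiset_prod, coeff_prod,
    ← piAntidiag_univ_fin_eq_antidiagonalTuple]
  refine Finset.sum_equiv Finsupp.equivFunOnFinite (fun l => by simp) (fun l _ => ?_)
  simp [geomSeries]

theorem hsymmSeries_pair_sub {x y u v : R} (h : x + y = u + v) (s : Multiset R) :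
    hsymmSeries (x ::ₘ y ::ₘ s) - hsymmSeries (u ::ₘ v ::ₘ s) =
      C (u * v - x * y) * X ^ 2 * hsymmSeries (x ::ₘ y ::ₘ u ::ₘ v ::ₘ s) := by
  have hx := one_sub_C_mul_X_mul_geomSeries x
  have hy := one_sub_C_mul_X_mul_geomSeries y
  have hu := one_sub_C_mul_X_mul_geomSeries u
  have hv := one_sub_C_mul_X_mul_geomSeries v
  have hC : C x + C y = C u + C v := by simp only [← map_add, h]
  simp only [hsymmSeries, Multiset.map_cons, Multiset.prod_cons, map_sub, map_mul]
  -- clear the denominators `1 - xX`, ...: `(1 - uX)(1 - vX) - (1 - xX)(1 - yX) = (uv - xy)X²`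
  set G := geomSeries (R := R)
  linear_combination (s.map G).prod * (G x * G y * G u * G v * X * hC
    - G x * G y * ((1 - C v * X) * G v * hu + hv) + G u * G v * ((1 - C y * X) * G y * hx + hy))

theorem coeff_hsymmSeries_pair_sub {x y u v : R} (h : x + y = u + v) (s : Multiset R) (n : ℕ) :
    coeff (n + 2) (hsymmSeries (x ::ₘ y ::ₘ s)) - coeff (n + 2) (hsymmSeries (u ::ₘ v ::ₘ s)) =
      (u * v - x * y) * coeff n (hsymmSeries (x ::ₘ y ::ₘ u ::ₘ v ::ₘ s)) := by
  rw [← map_sub, hsymmSeries_pair_sub h, mul_assoc, coeff_C_mul, coeff_X_pow_mul]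

end Series

section Smoothing

open Multiset

variable {R : Type*} [CommRing R] [LinearOrder R] [IsStrictOrderedRing R]

theorem Multiset.exists_lt_of_sum_eq_card_mul {s : Multiset R} {c : R}
    (hs : s.sum = card s * c) (hne : ∃ e ∈ s, e ≠ c) : ∃ x ∈ s, x < c := by
  by_contra! hge
  obtain ⟨e, he, hec⟩ := hne
  have := Multiset.sum_lt_sum hge ⟨e, he, lt_of_le_of_ne (hge e he) hec.symm⟩
  simp [hs, nsmul_eq_mul] at this

theorem Multiset.exists_gt_of_sum_eq_card_mul {s : Multiset R} {c : R}
    (hs : s.sum = card s * c) (hne : ∃ e ∈ s, e ≠ c) : ∃ y ∈ s, c < y := by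
  obtain ⟨y, hy, hyc⟩ := exists_lt_of_sum_eq_card_mul (s := s.map Neg.neg) (c := -c)
    (by rw [sum_map_neg', hs, card_map, mul_neg]) (by simpa using hne)
  simp only [mem_map] at hy
  obtain ⟨y, hy, rfl⟩ := hy
  exact ⟨y, hy, neg_lt_neg_iff.mp hyc⟩

theorem apply_replicate_le_of_pair_smoothing {F : Multiset R → R}
    (hF : ∀ x y u v s, x + y = u + v → x * y ≤ u * v → F (u ::ₘ v ::ₘ s) ≤ F (x ::ₘ y ::ₘ s))
    {c : R} (s : Multiset R) (hs : s.sum = card s * c) : F (replicate (card s) c) ≤ F s := by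
  induction hj : s.countP (· ≠ c) using Nat.strong_induction_on generalizing s with
  | _ j ih =>
  by_cases hall : ∀ e ∈ s, e = c
  · rw [← eq_replicate_card.mpr hall]
  push Not at hall
  obtain ⟨x, hx, hxc⟩ := exists_lt_of_sum_eq_card_mul hs hall
  obtain ⟨y, hy, hyc⟩ := exists_gt_of_sum_eq_card_mul hs hall
  obtain ⟨t, rfl⟩ := exists_cons_of_mem hx
  obtain ⟨t, rfl⟩ := exists_cons_of_mem ((mem_cons.mp hy).resolve_left (by linarith))
  set s' := c ::ₘ (x + y - c) ::ₘ t
  have hcard : card s' = card (x ::ₘ y ::ₘ t) := by simp [s']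
  have hsum : s'.sum = card s' * c := by
    simp only [s', Multiset.sum_cons, Multiset.card_cons, Nat.cast_add, Nat.cast_one] at hs ⊢
    linear_combination hs
  have hcount : s'.countP (· ≠ c) < j := by
    rw [← hj, countP_cons_of_neg (p := (· ≠ c)) _ (not_not.mpr rfl), countP_cons,
      countP_cons_of_pos (p := (· ≠ c)) _ hxc.ne, countP_cons_of_pos (p := (· ≠ c)) _ hyc.ne']
    split_ifs <;> omega
  calc F (replicate (card (x ::ₘ y ::ₘ t)) c) = F (replicate (card s') c) := by rw [hcard]
    _ ≤ F s' := ih _ hcount s' hsum rfl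
    _ ≤ F (x ::ₘ y ::ₘ t) := hF _ _ _ _ _ (by ring) (by nlinarith)

end Smoothing

section Bound

variable {R : Type*} [Field R] [LinearOrder R] [IsStrictOrderedRing R]

open Multiset

theorem coeff_hsymmSeries_replicate_le (d : ℕ) {c : R} (s : Multiset R)
    (hs : s.sum = card s * c) :
    coeff (2 * d) (hsymmSeries (replicate (card s) c)) ≤ coeff (2 * d) (hsymmSeries s) := by
  induction d generalizing c s with
  | zero => simp [coeff_zero_hsymmSeries]
  | succ d ih =>
    refine apply_replicate_le_of_pair_smoothing (F := fun s => coeff (2 * d + 2) (hsymmSeries s))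
      (fun x y u v t hsum hprod => ?_) s hs
    set t' := x ::ₘ y ::ₘ u ::ₘ v ::ₘ t
    have hcard : (card t' : R) ≠ 0 := Nat.cast_ne_zero.mpr (by simp [t'])
    have hnonneg : 0 ≤ coeff (2 * d) (hsymmSeries t') := by
      refine le_trans ?_ (ih t' (mul_div_cancel₀ _ hcard).symm)
      rw [coeff_hsymmSeries_replicate]
      exact mul_nonneg (Nat.cast_nonneg _) ((even_two_mul d).pow_nonneg _)
    rw [← sub_nonneg, coeff_hsymmSeries_pair_sub hsum]
    exact mul_nonneg (sub_nonneg.mpr hprod) hnonneg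

theorem choose_mul_mean_pow_le_coeff_hsymmSeries (d : ℕ) {s : Multiset R} (hs : s ≠ 0) :
    ((2 * d + card s - 1).choose (2 * d) : R) * (s.sum / card s) ^ (2 * d) ≤
      coeff (2 * d) (hsymmSeries s) := by
  have hcard : (card s : R) ≠ 0 := by simpa using hs
  rw [← coeff_hsymmSeries_replicate]
  exact coeff_hsymmSeries_replicate_le d s (mul_div_cancel₀ _ hcard).symm

end Bound

section ProductWeights

variable {ι α : Type*} [Fintype ι] [DecidableEq ι] [Fintype α]

theorem sum_prod_weights_eq_one {R : Type*} [CommSemiring R] {w : α → R} (hw : ∑ a, w a = 1) :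
    ∑ ω : ι → α, ∏ i, w (ω i) = 1 := by
  rw [← Fintype.prod_sum]; simp [hw]

theorem sum_prod_weights_mul_apply {R : Type*} [CommSemiring R] {w : α → R}
    (hw : ∑ a, w a = 1) (f : α → R) (i : ι) :
    ∑ ω : ι → α, (∏ j, w (ω j)) * f (ω i) = ∑ a, w a * f a := by
  calc ∑ ω : ι → α, (∏ j, w (ω j)) * f (ω i)
      = ∑ ω : ι → α, ∏ j, w (ω j) * (if j = i then f (ω j) else 1) := by
        refine sum_congr rfl fun ω _ => ?_
        rw [prod_mul_distrib, Fintype.prod_ite_eq']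
    _ = ∏ j, ∑ a, w a * (if j = i then f a else 1) := by rw [Fintype.prod_sum]
    _ = ∑ a, w a * f a := by
        rw [Fintype.prod_eq_single i fun j hj => ?_]
        · simp
        · simp [hj, hw]

theorem sum_prod_weights_mul_mean {K : Type*} [Field K] [CharZero K] [Nonempty ι] {w : α → K}
    (hw : ∑ a, w a = 1) (X : α → K) :
    ∑ ω : ι → α, (∏ j, w (ω j)) * ((∑ i, X (ω i)) / Fintype.card ι) = ∑ a, w a * X a := by
  simp_rw [mul_div_assoc', mul_sum]
  rw [← sum_div, sum_comm]
  simp_rw [sum_prod_weights_mul_apply hw]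
  rw [sum_const, card_univ, nsmul_eq_mul, mul_div_cancel_left₀ _ (by simp)]

end ProductWeights

theorem choose_mul_mean_pow_le_hSym {k : ℕ} (hk : k ≠ 0) (d : ℕ) (x : Fin k → ℝ) :
    ((2 * d + k - 1).choose (2 * d) : ℝ) * ((∑ i, x i) / k) ^ (2 * d) ≤ hSym k (2 * d) x := by
  rw [hSym, ← coeff_hsymmSeries_map_eq_sum_antidiagonalTuple]
  have hcard : Multiset.card (univ.val.map x) = k := by simp
  have := choose_mul_mean_pow_le_coeff_hsymmSeries d (s := univ.val.map x)
    (Multiset.card_pos.mp (by omega))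
  rw [hcard] at this
  exact this

theorem expectation_hSym_ge_general (N m d : ℕ) (hdm : 2 * d ≤ m)
    (w X : Fin N → ℝ) (hw : ∀ i, 0 ≤ w i) (hw1 : ∑ i, w i = 1) :
    ∑ ω : Fin (m - 2 * d + 1) → Fin N,
        (∏ i, w (ω i)) * hSym (m - 2 * d + 1) (2 * d) (fun i => X (ω i)) ≥
      (Nat.choose m (2 * d) : ℝ) * (∑ i, w i * X i) ^ (2 * d) := by
  set k := m - 2 * d + 1
  have hm : 2 * d + k - 1 = m := by omega
  set W : (Fin k → Fin N) → ℝ := fun ω => ∏ i, w (ω i)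
  set mean : (Fin k → Fin N) → ℝ := fun ω => (∑ i, X (ω i)) / k
  have hW : ∀ ω, 0 ≤ W ω := fun ω => prod_nonneg fun i _ => hw (ω i)
  have hmean : ∑ ω, W ω * mean ω = ∑ i, w i * X i := by
    simpa using sum_prod_weights_mul_mean (ι := Fin k) hw1 X
  have jensen : (∑ ω, W ω * mean ω) ^ (2 * d) ≤ ∑ ω, W ω * mean ω ^ (2 * d) := by
    simpa using (even_two_mul d).convexOn_pow.map_sum_le (fun ω _ => hW ω)
      (sum_prod_weights_eq_one hw1) (fun ω _ => Set.mem_univ (mean ω))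
  calc (m.choose (2 * d) : ℝ) * (∑ i, w i * X i) ^ (2 * d)
      ≤ m.choose (2 * d) * ∑ ω, W ω * mean ω ^ (2 * d) := by rw [← hmean]; gcongr
    _ = ∑ ω, W ω * (m.choose (2 * d) * mean ω ^ (2 * d)) := by
        rw [mul_sum]; exact sum_congr rfl fun ω _ => by ring
    _ ≤ ∑ ω, W ω * hSym k (2 * d) (fun i => X (ω i)) := by
        gcongr with ω
        · exact hW ω
        · rw [← hm]; exact choose_mul_mean_pow_le_hSym (by omega) d _

/-- For a finitely valued random variable `X` (values `X i` with probabilities `w i`)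
and i.i.d. copies `X_1, …, X_{m-2d+1}`,
`E[h_{2d}(X_1, …, X_{m-2d+1})] ≥ C(m, 2d) (E[X])^{2d}`. -/
theorem expectation_hSym_ge (N m d : ℕ) (hN : 1 ≤ N) (hd : 1 ≤ d) (hdm : 2 * d ≤ m)
    (w X : Fin N → ℝ) (hw : ∀ i, 0 ≤ w i) (hw1 : ∑ i, w i = 1) :
    ∑ ω : Fin (m - 2 * d + 1) → Fin N,
        (∏ i, w (ω i)) * hSym (m - 2 * d + 1) (2 * d) (fun i => X (ω i)) ≥
      (Nat.choose m (2 * d) : ℝ) * (∑ i, w i * X i) ^ (2 * d) :=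
  expectation_hSym_ge_general N m d hdm w X hw hw1
end

section
/- Let m ≥ 3 be odd. For a real symmetric n×n matrix A, define the cycle density c_m(A) = trace(A^m)/n^m and the edge density e(A) = (1ᵀA1)/n². Then for any real symmetric n×n matrix W with entries in [0,1] and J the all-ones matrix, c_m(W) + c_m(J - W) ≥ e(W)^m + e(J-W)^m, where e(J-W) = 1 - e(W); that is, trace(W^m)/n^m + trace((J-W)^m)/n^m ≥ ((1ᵀW1)/n²)^m + (1 - (1ᵀW1)/n²)^m. -/
open Matrix Polynomial Finset

namespace BMNaux

variable {n : ℕ}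

def asum {α : Type*} [AddCommMonoid α] (A : Matrix (Fin n) (Fin n) α) : α :=
  ∑ i, ∑ j, A i j

lemma asum_eq_dot (A : Matrix (Fin n) (Fin n) ℝ) :
    (fun _ => (1:ℝ)) ⬝ᵥ A.mulVec (fun _ => (1:ℝ)) = asum A := by
  simp [asum, dotProduct, Matrix.mulVec]

lemma trace_mul_ones {α : Type*} [CommRing α] (A : Matrix (Fin n) (Fin n) α) :
    (A * Matrix.of (fun _ _ => (1:α))).trace = asum A := by
  simp [Matrix.trace, Matrix.diag, Matrix.mul_apply, asum]

lemma eval_trace (t : ℝ) (A : Matrix (Fin n) (Fin n) ℝ[X]) :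
    eval t A.trace = (A.map (eval t)).trace := by
  simp [Matrix.trace, Matrix.diag, eval_finset_sum, Matrix.map_apply]

lemma eval_asum (t : ℝ) (A : Matrix (Fin n) (Fin n) ℝ[X]) :
    eval t (asum A) = asum (A.map (eval t)) := by
  simp [asum, eval_finset_sum, Matrix.map_apply]

lemma map_eval_pow (t : ℝ) (Q : Matrix (Fin n) (Fin n) ℝ[X]) (k : ℕ) :
    (Q^k).map (eval t) = (Q.map (eval t))^k := by
  have h1 : ∀ B : Matrix (Fin n) (Fin n) ℝ[X], B.map (eval t) = (evalRingHom t).mapMatrix B := by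
    intro B; rw [RingHom.mapMatrix_apply, coe_evalRingHom]
  rw [h1, h1, map_pow]

lemma map_der_mul (A B : Matrix (Fin n) (Fin n) ℝ[X]) :
    (A * B).map (⇑(derivative (R:=ℝ))) =
      A.map (⇑(derivative (R:=ℝ))) * B + A * B.map (⇑(derivative (R:=ℝ))) := by
  apply Matrix.ext; intro i j
  simp only [Matrix.map_apply, Matrix.mul_apply, Matrix.add_apply]
  rw [derivative_sum]
  rw [Finset.sum_congr rfl (fun k _ => (derivative_mul :
      derivative (A i k * B k j) = _))]
  exact Finset.sum_add_distrib

lemma trace_map_der (A : Matrix (Fin n) (Fin n) ℝ[X]) :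
    (A.map (⇑(derivative (R:=ℝ)))).trace = derivative A.trace := by
  simp only [Matrix.trace, Matrix.diag, Matrix.map_apply]
  rw [derivative_sum]

lemma trace_pow_der (Q : Matrix (Fin n) (Fin n) ℝ[X]) :
    ∀ (k j : ℕ), (Q^j * (Q^(k+1)).map (⇑(derivative (R:=ℝ)))).trace
      = (k+1) • ((Q^(j+k)) * Q.map (⇑(derivative (R:=ℝ)))).trace := by
  intro k
  induction k with
  | zero => intro j; simp
  | succ k ih =>
    intro j
    have hs : Q^(k+1+1) = Q * Q^(k+1) := by rw [← pow_succ']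
    rw [hs, map_der_mul, Matrix.mul_add, Matrix.trace_add]
    have h1 : Q^j * (Q.map (⇑(derivative (R:=ℝ))) * Q^(k+1))
        = (Q^j * Q.map (⇑(derivative (R:=ℝ)))) * Q^(k+1) := by rw [mul_assoc]
    rw [h1, Matrix.trace_mul_comm, ← mul_assoc, ← pow_add]
    have h2 : Q^j * (Q * (Q^(k+1)).map (⇑(derivative (R:=ℝ))))
        = Q^(j+1) * (Q^(k+1)).map (⇑(derivative (R:=ℝ))) := by
      rw [← mul_assoc, ← pow_succ]
    rw [h2, ih (j+1)]
    have e3 : k+1+j = j+(k+1) := by omega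
    have e4 : j+1+k = j+(k+1) := by omega
    rw [e3, e4, succ_nsmul]
    ring

lemma der_trace_pow (Q : Matrix (Fin n) (Fin n) ℝ[X]) (k : ℕ) :
    derivative ((Q^(k+1)).trace)
      = (k+1) • ((Q^k) * Q.map (⇑(derivative (R:=ℝ)))).trace := by
  rw [← trace_map_der]
  simpa using trace_pow_der Q k 0

lemma asum_pow_split (M : Matrix (Fin n) (Fin n) ℝ) (hM : Mᵀ = M) (j j' : ℕ) :
    asum (M^(j+j')) = ((M^j).mulVec (fun _ => 1)) ⬝ᵥ ((M^j').mulVec (fun _ => 1)) := by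
  have hsym : (M^j)ᵀ = M^j := by rw [transpose_pow, hM]
  rw [← asum_eq_dot, pow_add, ← Matrix.mulVec_mulVec, Matrix.dotProduct_mulVec]
  congr 1
  calc (fun _ => (1:ℝ)) ᵥ* M ^ j = (fun _ => (1:ℝ)) ᵥ* (M ^ j)ᵀ := by rw [hsym]
    _ = (M ^ j) *ᵥ (fun _ => (1:ℝ)) := Matrix.vecMul_transpose _ _

lemma dot_sq_le (x y : Fin n → ℝ) : (x ⬝ᵥ y)^2 ≤ (x ⬝ᵥ x) * (y ⬝ᵥ y) := by
  have := Finset.sum_mul_sq_le_sq_mul_sq Finset.univ x y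
  simpa [dotProduct, pow_two] using this

lemma dot_self_nonneg (x : Fin n → ℝ) : 0 ≤ x ⬝ᵥ x :=
  Finset.sum_nonneg fun i _ => mul_self_nonneg (x i)

lemma moment (M : Matrix (Fin n) (Fin n) ℝ) (hM : Mᵀ = M) (l : ℕ) :
    (asum M)^(2*l) * (n:ℝ) ≤ (n:ℝ)^(2*l) * asum (M^(2*l)) := by
  set N : ℝ := (n:ℝ) with hN
  have hN0 : 0 ≤ N := by positivity
  set u : ℕ → (Fin n → ℝ) := fun j => (M^j).mulVec (fun _ => 1) with hu
  set γ : ℕ → ℝ := fun j => (u j) ⬝ᵥ (u j) with hγ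
  have hγnn : ∀ j, 0 ≤ γ j := fun j => dot_self_nonneg _
  have hsplit : ∀ j j', asum (M^(j+j')) = (u j) ⬝ᵥ (u j') := fun j j' =>
    asum_pow_split M hM j j'
  have hγ0 : γ 0 = N := by
    simp [hγ, hu, pow_zero, Matrix.one_mulVec, dotProduct, hN]
  have hA : ∀ j, γ (j+1) ^ 2 ≤ γ j * γ (j+2) := by
    intro j
    have h1 : γ (j+1) = (u j) ⬝ᵥ (u (j+2)) := by
      show u (j+1) ⬝ᵥ u (j+1) = u j ⬝ᵥ u (j+2)
      have e1 : (j+1) + (j+1) = j + (j+2) := by omega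
      rw [← hsplit (j+1) (j+1), e1, hsplit j (j+2)]
    rw [h1]
    exact dot_sq_le _ _
  have hC : ∀ j, γ j * γ 1 ≤ N * γ (j+1) := by
    intro j
    induction j with
    | zero => rw [hγ0]
    | succ j ih =>
      rcases eq_or_lt_of_le (hγnn (j+1)) with h0 | hpos
      · rw [← h0]
        have := mul_nonneg hN0 (hγnn (j+2))
        linarith
      · have h1 : γ (j+1) * (γ (j+1) * γ 1) ≤ γ (j+1) * (N * γ (j+2)) := by
          calc γ (j+1) * (γ (j+1) * γ 1) = (γ (j+1))^2 * γ 1 := by ring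
            _ ≤ (γ j * γ (j+2)) * γ 1 := by
                have := hA j
                nlinarith [hγnn 1]
            _ = (γ j * γ 1) * γ (j+2) := by ring
            _ ≤ (N * γ (j+1)) * γ (j+2) := by
                have := hγnn (j+2); nlinarith
            _ = γ (j+1) * (N * γ (j+2)) := by ring
        exact le_of_mul_le_mul_left h1 hpos
  have hB : ∀ j, γ 1 ^ j * N ≤ N ^ j * γ j := by
    intro j
    induction j with
    | zero => simp [hγ0]
    | succ j ih =>
      calc γ 1 ^ (j+1) * N = γ 1 * (γ 1 ^ j * N) := by ring
        _ ≤ γ 1 * (N ^ j * γ j) := by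
            have := hγnn 1; nlinarith
        _ = N ^ j * (γ j * γ 1) := by ring
        _ ≤ N ^ j * (N * γ (j+1)) := by
            have : (0:ℝ) ≤ N ^ j := pow_nonneg hN0 j
            nlinarith [hC j]
        _ = N ^ (j+1) * γ (j+1) := by ring
  have hCS0 : (asum M)^2 ≤ N * γ 1 := by
    have h1 : asum M = (u 0) ⬝ᵥ (u 1) := by
      have := hsplit 0 1; simpa using this
    rw [h1]
    calc ((u 0) ⬝ᵥ (u 1))^2 ≤ γ 0 * γ 1 := dot_sq_le _ _
      _ = N * γ 1 := by rw [hγ0]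
  have hfin : asum (M^(2*l)) = γ l := by
    have e : 2*l = l + l := by omega
    rw [e, hsplit l l]
  rw [hfin]
  calc (asum M)^(2*l) * N = ((asum M)^2)^l * N := by rw [← pow_mul]
    _ ≤ (N * γ 1)^l * N := by
        have h2 : (0:ℝ) ≤ (asum M)^2 := sq_nonneg _
        have := pow_le_pow_left₀ h2 hCS0 l
        nlinarith
    _ = N^l * (γ 1 ^ l * N) := by rw [mul_pow]; ring
    _ ≤ N^l * (N^l * γ l) := by
        have : (0:ℝ) ≤ N^l := pow_nonneg hN0 l
        nlinarith [hB l]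
    _ = N^(2*l) * γ l := by rw [two_mul, pow_add]; ring

end BMNaux

open BMNaux

/-- Matrix form of the Behague–Morrison–Noel conjecture (Theorem 1 for odd cycles):
for a real symmetric matrix `W` with entries in `[0,1]`, `J` the all-ones matrix, and
odd `m ≥ 3`, `trace(W^m)/n^m + trace((J−W)^m)/n^m ≥ e^m + (1−e)^m` where
`e = (1ᵀ W 1)/n²`. -/
theorem cycle_density_common (n : ℕ) (hn : 0 < n) (m : ℕ) (hm : 3 ≤ m) (hodd : Odd m)
    (W : Matrix (Fin n) (Fin n) ℝ) (hW : W.IsSymm)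
    (hW01 : ∀ i j, W i j ∈ Set.Icc (0 : ℝ) 1) :
    (W ^ m).trace / (n : ℝ) ^ m +
        (((Matrix.of fun _ _ => (1 : ℝ)) - W) ^ m).trace / (n : ℝ) ^ m ≥
      (((fun _ => (1 : ℝ)) ⬝ᵥ W.mulVec (fun _ => (1 : ℝ))) / (n : ℝ) ^ 2) ^ m +
        (1 - ((fun _ => (1 : ℝ)) ⬝ᵥ W.mulVec (fun _ => (1 : ℝ))) / (n : ℝ) ^ 2) ^ m := by
  obtain ⟨l, hl⟩ := hodd
  have hm2 : m = 2*l + 1 := by omega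
  subst hm2
  set N : ℝ := (n : ℝ) with hNdef
  have hNpos : (0:ℝ) < N := by rw [hNdef]; exact_mod_cast hn
  have hNne : N ≠ 0 := ne_of_gt hNpos
  set J' : Matrix (Fin n) (Fin n) ℝ := Matrix.of (fun _ _ => (1:ℝ)) with hJ'
  have hsd : (fun _ => (1:ℝ)) ⬝ᵥ W.mulVec (fun _ => (1:ℝ)) = asum W := asum_eq_dot W
  rw [hsd]
  set s : ℝ := asum W with hs
  obtain ⟨a, ha⟩ : ∃ a : ℝ, a = s / N := ⟨_, rfl⟩
  -- the polynomial matrix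
  set Qp : Matrix (Fin n) (Fin n) ℝ[X] :=
    W.map C - (X : ℝ[X]) • Matrix.of (fun _ _ => (1:ℝ[X])) with hQp
  have hQ1 : ∀ t : ℝ, Qp.map (eval t) = W - t • J' := by
    intro t
    apply Matrix.ext; intro i j
    simp [hQp, Matrix.map_apply, Matrix.sub_apply, Matrix.smul_apply, smul_eq_mul, hJ']
  have hQD : Qp.map (⇑(derivative (R:=ℝ))) = - Matrix.of (fun _ _ => (1:ℝ[X])) := by
    apply Matrix.ext; intro i j
    simp [hQp, Matrix.map_apply, Matrix.sub_apply, Matrix.smul_apply, smul_eq_mul]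
  -- the polynomial
  set P : ℝ[X] := (Qp^(2*l+1)).trace - (C a - C N * X)^(2*l+1) with hP
  -- evaluation of P
  have hfeval : ∀ t : ℝ, eval t P = ((W - t • J')^(2*l+1)).trace - (a - N*t)^(2*l+1) := by
    intro t
    rw [hP, eval_sub, eval_trace, map_eval_pow, hQ1]
    congr 1
    rw [eval_pow]
    congr 1
    simp
  -- derivative of P
  have hd2 : derivative ((C a - C N * X)^(2*l+1))
      = C ((2*l+1 : ℕ) : ℝ) * (C a - C N * X)^(2*l) * (- C N) := by
    have e : (2*l+1) - 1 = 2*l := by omega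
    rw [derivative_pow, e]
    congr 1
    simp
  have hPder : derivative P
      = (2*l+1) • (-(asum (Qp^(2*l)))) - (C ((2*l+1 : ℕ) : ℝ) * (C a - C N * X)^(2*l) * (- C N)) := by
    rw [hP, derivative_sub, der_trace_pow Qp (2*l), hQD, Matrix.mul_neg, Matrix.trace_neg,
      trace_mul_ones, hd2]
  -- pointwise bound on the derivative
  have hder_nonpos : ∀ t : ℝ, eval t (derivative P) ≤ 0 := by
    intro t
    set M : Matrix (Fin n) (Fin n) ℝ := W - t • J' with hM
    have hJT : J'ᵀ = J' := by
      apply Matrix.ext; intro i j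
      simp [hJ', Matrix.transpose_apply]
    have hMsym : Mᵀ = M := by
      rw [hM, Matrix.transpose_sub, Matrix.transpose_smul, hW, hJT]
    have hasumM : asum M = N * (a - N * t) := by
      have h1 : asum M = s - t * N^2 := by
        rw [hM]
        have : asum (W - t • J') = asum W - asum (t • J') := by
          simp [asum, Matrix.sub_apply, Finset.sum_sub_distrib]
        rw [this, ← hs]
        congr 1
        simp [asum, hJ', Matrix.smul_apply, smul_eq_mul, Finset.sum_const, Finset.card_univ]
        ring
      rw [h1, ha]
      field_simp
    have hkey : N * (a - N*t)^(2*l) ≤ asum (M^(2*l)) := by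
      have hmom := moment M hMsym l
      rw [hasumM, mul_pow] at hmom
      have h2 : N^(2*l) * ((a - N*t)^(2*l) * N) ≤ N^(2*l) * asum (M^(2*l)) := by
        calc N^(2*l) * ((a - N*t)^(2*l) * N) = N ^ (2 * l) * (a - N * t) ^ (2 * l) * N := by ring
          _ ≤ N^(2*l) * asum (M^(2*l)) := hmom
      have h3 := le_of_mul_le_mul_left h2 (pow_pos hNpos (2*l))
      linarith
    have heval : eval t (derivative P)
        = ((2*l+1:ℕ):ℝ) * (-(asum (M^(2*l)))) + ((2*l+1:ℕ):ℝ) * (a - N*t)^(2*l) * N := by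
      rw [hPder, eval_sub, eval_mul, eval_mul, eval_pow, eval_neg, eval_C, eval_C, eval_sub,
        eval_mul, eval_C, eval_C, eval_X]
      have h4 : eval t ((2*l+1) • (-(asum (Qp^(2*l)))))
          = ((2*l+1:ℕ):ℝ) * eval t (-(asum (Qp^(2*l)))) := by
        rw [nsmul_eq_mul, eval_mul, eval_natCast]
      rw [h4, eval_neg, eval_asum, map_eval_pow, hQ1, ← hM]
      ring
    rw [heval]
    have hc : (0:ℝ) ≤ ((2*l+1:ℕ):ℝ) := by positivity
    nlinarith [hkey]
  -- antitonicity
  set f : ℝ → ℝ := fun t => eval t P with hf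
  have hanti : AntitoneOn f (Set.Icc (0:ℝ) 1) := by
    apply antitoneOn_of_deriv_nonpos (convex_Icc 0 1)
    · exact (Polynomial.continuous P).continuousOn
    · exact (P.differentiable).differentiableOn
    · intro x hx
      rw [Polynomial.deriv]
      exact hder_nonpos x
  have hineq : f 1 ≤ f 0 :=
    hanti (Set.mem_Icc.mpr ⟨le_refl 0, zero_le_one⟩)
      (Set.mem_Icc.mpr ⟨zero_le_one, le_refl 1⟩) zero_le_one
  -- endpoints
  have hoddm : Odd (2*l+1) := ⟨l, by omega⟩
  have hf0 : f 0 = (W^(2*l+1)).trace - a^(2*l+1) := by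
    rw [hf]; simp only []
    rw [hfeval 0]
    simp
  have hf1 : f 1 = -(((J' - W)^(2*l+1)).trace) + (N - a)^(2*l+1) := by
    rw [hf]; simp only []
    rw [hfeval 1]
    have e1 : W - (1:ℝ) • J' = -(J' - W) := by rw [one_smul, neg_sub]
    rw [e1, hoddm.neg_pow, Matrix.trace_neg]
    have e2 : (a - N*1) = -(N - a) := by ring
    rw [e2, hoddm.neg_pow]
    ring
  have hkey2 : a^(2*l+1) + (N - a)^(2*l+1)
      ≤ (W^(2*l+1)).trace + ((J' - W)^(2*l+1)).trace := by
    rw [hf0, hf1] at hineq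
    linarith
  -- final algebra
  have hsN : s / N^2 = a / N := by rw [ha, div_div, ← pow_two]
  have hsN2 : 1 - a / N = (N - a) / N := by field_simp
  rw [hsN, hsN2, div_pow, div_pow, ← add_div, ← add_div]
  have hpowpos : (0:ℝ) < N^(2*l+1) := pow_pos hNpos _
  rw [ge_iff_le]
  gcongr
end

section
/- Let W be a real symmetric n×n matrix with entries in [0,1], m ≥ 3, and suppose trace(W^m)/n^m + trace((J−W)^m)/n^m ≤ 2^{1−m}(1+ε) for some ε ≥ 0, where J is the all-ones matrix. Let U = 2W − J. Then (1ᵀU²1)/n³ ≤ ε/(m−1). -/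
/-!
Let `J` be the all-ones matrix, `V` a matrix and `g = ∑ₐ (1ᵀ Vᵃ 1) tᵃ`. Cutting the cyclic words
in `J` and `V` at their letters `J` gives `tr (J + V)ᵐ - tr Vᵐ = ∑_K (m / K) [t^(m-K)] g^K`, which
comes out of the power series identity `T (1 - t g) = (t g)'`. Replacing `V` by `-V` multiplies
`[t^N] g^K` by `(-1)^N`, so `tr (J + V)ᵐ + tr (J - V)ᵐ` keeps only even `N`. For symmetric `V`
these coefficients are nonnegative (Hunter's positivity): `1ᵀ V^(a+b) 1 = ⟪Vᵃ 1, Vᵇ 1⟫` makes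
`(b, c) ↦ C(b + c, b) [t^(b+c)] g^K` a Gram kernel, with diagonal entries `C(2r, r) [t^2r] g^K`.
The terms `K = m` and `K = m - 2` alone give `tr (J + V)ᵐ + tr (J - V)ᵐ ≥ 2 nᵐ + 2 m n^(m-3) 1ᵀV²1`,
and for `V = 2W - J` the left side is `2ᵐ (tr Wᵐ + tr (J - W)ᵐ)`.
-/

open Finset PowerSeries

theorem Finset.Nat.sum_antidiagonal_sum_antidiagonal_comm {M : Type*} [AddCommMonoid M] (k : ℕ)
    (F : ℕ → ℕ → ℕ → M) :
    ∑ p ∈ antidiagonal k, ∑ q ∈ antidiagonal p.2, F p.1 q.1 q.2 =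
      ∑ p ∈ antidiagonal k, ∑ q ∈ antidiagonal p.2, F q.1 p.1 q.2 := by
  simp only [Nat.sum_antidiagonal_eq_sum_range_succ_mk]
  refine (sum_comm' fun a c => ?_).trans (sum_congr rfl fun c _ => sum_congr rfl fun a _ => ?_)
  · simp only [mem_range]; omega
  · rw [Nat.sub_right_comm]

theorem add_pow_succ_eq_pow_succ_add_sum {R : Type*} [Semiring R] (a b : R) (q : ℕ) :
    (a + b) ^ (q + 1) = b ^ (q + 1) + ∑ p ∈ antidiagonal q, b ^ p.1 * a * (a + b) ^ p.2 := by
  induction q with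
  | zero => simp [add_comm]
  | succ q ih =>
    rw [Nat.sum_antidiagonal_succ, pow_succ' _ (q + 1), add_mul]
    nth_rw 2 [ih]
    simp only [mul_add, mul_sum, pow_zero, one_mul, pow_succ', mul_assoc]
    abel

namespace Nat

theorem choose_add_eq_sum_choose_mul_choose {b c R : ℕ} (hb : b ≤ R) :
    (b + c).choose b = ∑ j ∈ range (R + 1), b.choose j * c.choose j := by
  rw [Nat.add_choose_eq, ← Finset.Nat.sum_antidiagonal_swap]
  simp only [Prod.fst_swap, Prod.snd_swap]
  rw [Finset.Nat.sum_antidiagonal_eq_sum_range_succ (fun j i => b.choose i * c.choose j)]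
  refine (sum_congr rfl fun j hj => ?_).trans
    (sum_subset (range_subset_range.2 (by omega)) fun j _ hj => ?_)
  · rw [Nat.choose_symm (by simp at hj; omega)]
  · rw [Nat.choose_eq_zero_of_lt (by simp at hj; omega), zero_mul]

theorem choose_smul_sum_antidiagonal_add {M : Type*} [AddCommMonoid M] (b c : ℕ)
    (F : ℕ → ℕ → M) :
    (b + c).choose b • ∑ p ∈ antidiagonal (b + c), F p.1 p.2 =
      ∑ p ∈ antidiagonal b, ∑ q ∈ antidiagonal c,
        ((p.1 + q.1).choose p.1 * (p.2 + q.2).choose p.2) • F (p.1 + q.1) (p.2 + q.2) := by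
  calc (b + c).choose b • ∑ p ∈ antidiagonal (b + c), F p.1 p.2
      = ∑ e ∈ antidiagonal (b + c), ∑ p ∈ antidiagonal b,
          (e.1.choose p.1 * e.2.choose p.2) • F e.1 e.2 := by
        rw [smul_sum]
        refine sum_congr rfl fun e he => ?_
        rw [← HasAntidiagonal.mem_antidiagonal.1 he, Nat.add_choose_eq, sum_smul]
    _ = _ := by
        rw [sum_comm]
        refine sum_congr rfl fun p hp => ?_
        have hp : p.1 + p.2 = b := HasAntidiagonal.mem_antidiagonal.1 hp
        refine (sum_subset (fun e he => ?_) fun e he he' => ?_).symm.trans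
          (sum_map (antidiagonal c) (addLeftEmbedding p) _)
        · obtain ⟨q, hq, rfl⟩ := mem_map.1 he
          simp only [HasAntidiagonal.mem_antidiagonal] at hq ⊢
          simp only [addLeftEmbedding_apply, Prod.fst_add, Prod.snd_add]
          omega
        · have : e.1 < p.1 ∨ e.2 < p.2 := by
            by_contra! h
            refine he' (mem_map.2 ⟨(e.1 - p.1, e.2 - p.2), ?_, ?_⟩)
            · simp only [HasAntidiagonal.mem_antidiagonal] at he ⊢; omega
            · simp only [addLeftEmbedding_apply, Prod.ext_iff, Prod.fst_add, Prod.snd_add]; omega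
          rcases this with h | h <;> simp [Nat.choose_eq_zero_of_lt h]

end Nat

-- Only on `{0, …, R}²`: the Pascal kernel `C(b + c, b)` has infinite rank.
def IsGramOn (R : ℕ) (k : ℕ → ℕ → ℝ) : Prop :=
  ∃ (κ : Type) (_ : Fintype κ) (φ : ℕ → κ → ℝ), ∀ b ≤ R, ∀ c ≤ R, k b c = ∑ i, φ b i * φ c i

namespace IsGramOn

variable {R : ℕ} {k k' : ℕ → ℕ → ℝ}

theorem diag_nonneg (hk : IsGramOn R k) {b : ℕ} (hb : b ≤ R) : 0 ≤ k b b := by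
  obtain ⟨κ, _, φ, hφ⟩ := hk
  rw [hφ b hb b hb]
  exact sum_nonneg fun i _ => mul_self_nonneg _

theorem mul (hk : IsGramOn R k) (hk' : IsGramOn R k') :
    IsGramOn R fun b c => k b c * k' b c := by
  obtain ⟨κ, _, φ, hφ⟩ := hk
  obtain ⟨κ', _, φ', hφ'⟩ := hk'
  refine ⟨κ × κ', inferInstance, fun b i => φ b i.1 * φ' b i.2, fun b hb c hc => ?_⟩
  dsimp only
  rw [hφ b hb c hc, hφ' b hb c hc, sum_mul_sum, Fintype.sum_prod_type]
  exact sum_congr rfl fun i _ => sum_congr rfl fun i' _ => by ring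

theorem convolution (hk : IsGramOn R k) (hk' : IsGramOn R k') :
    IsGramOn R fun b c => ∑ p ∈ antidiagonal b, ∑ q ∈ antidiagonal c, k p.1 q.1 * k' p.2 q.2 := by
  obtain ⟨κ, _, φ, hφ⟩ := hk
  obtain ⟨κ', _, φ', hφ'⟩ := hk'
  refine ⟨κ × κ', inferInstance, fun b i => ∑ p ∈ antidiagonal b, φ p.1 i.1 * φ' p.2 i.2,
    fun b hb c hc => ?_⟩
  symm
  simp only [sum_mul_sum]
  rw [sum_comm]
  refine sum_congr rfl fun p hp => ?_
  rw [sum_comm]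
  refine sum_congr rfl fun q hq => ?_
  have hp := HasAntidiagonal.mem_antidiagonal.1 hp
  have hq := HasAntidiagonal.mem_antidiagonal.1 hq
  rw [hφ p.1 (by omega) q.1 (by omega), hφ' p.2 (by omega) q.2 (by omega), sum_mul_sum,
    Fintype.sum_prod_type]
  exact sum_congr rfl fun i _ => sum_congr rfl fun i' _ => by ring

end IsGramOn

theorem isGramOn_choose (R : ℕ) : IsGramOn R fun b c => ((b + c).choose b : ℝ) :=
  ⟨Fin (R + 1), inferInstance, fun b j => (b.choose j : ℝ), fun b hb c _ => by
    dsimp only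
    rw [Nat.choose_add_eq_sum_choose_mul_choose hb, Fin.sum_univ_eq_sum_range
      (fun j => (b.choose j : ℝ) * c.choose j)]
    push_cast; rfl⟩

namespace PowerSeries

theorem coeff_mk_pow_nonneg_of_even {ι : Type*} [Fintype ι] {s : ℕ → ℝ} (u : ℕ → ι → ℝ)
    (hs : ∀ a b, s (a + b) = ∑ x, u a x * u b x) (K : ℕ) {N : ℕ} (hN : Even N) :
    0 ≤ coeff N (mk s ^ K) := by
  obtain ⟨r, rfl⟩ := hN
  -- By Vandermonde, multiplying by `mk s` convolves the kernel with `C(b + c, b) s (b + c)`.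
  have hgram : ∀ K, IsGramOn r fun b c => (b + c).choose b * coeff (b + c) (mk s ^ K) := by
    intro K
    induction K with
    | zero =>
      refine ⟨Unit, inferInstance, fun b _ => if b = 0 then 1 else 0, fun b _ c _ => ?_⟩
      rcases Nat.eq_zero_or_pos b with rfl | hb <;> rcases Nat.eq_zero_or_pos c with rfl | hc <;>
        simp [coeff_one, *, Nat.pos_iff_ne_zero.1, Nat.add_eq_zero_iff]
    | succ K ih =>
      have hs' : IsGramOn r fun b c => s (b + c) :=
        ⟨Fin (Fintype.card ι), inferInstance, fun a x => u a ((Fintype.equivFin ι).symm x),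
          fun b _ c _ => by dsimp only; rw [hs, ← (Fintype.equivFin ι).symm.sum_comp]⟩
      have hconv := ((isGramOn_choose r).mul hs').convolution ih
      convert hconv using 3 with b c
      rw [pow_succ', coeff_mul, ← nsmul_eq_mul,
        Nat.choose_smul_sum_antidiagonal_add b c fun e f => coeff e (mk s) * coeff f (mk s ^ K)]
      refine sum_congr rfl fun p _ => sum_congr rfl fun q _ => ?_
      rw [coeff_mk, nsmul_eq_mul]
      push_cast; ring
  have h := (hgram K).diag_nonneg le_rfl
  exact nonneg_of_mul_nonneg_right h (by exact_mod_cast Nat.choose_pos (Nat.le_add_right r r))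

theorem mul_pow_mul_coeff_two_le_coeff_two_pow {R : Type*} [CommRing R] [LinearOrder R]
    [IsStrictOrderedRing R] {g : R⟦X⟧} (hg : 0 ≤ constantCoeff g) (K : ℕ) :
    (K + 1) * constantCoeff g ^ K * coeff 2 g ≤ coeff 2 (g ^ (K + 1)) := by
  induction K with
  | zero => simp
  | succ K ih =>
    rw [pow_succ' g (K + 1), coeff_mul, Nat.sum_antidiagonal_succ, Nat.sum_antidiagonal_succ,
      Nat.antidiagonal_zero, sum_singleton, coeff_one_pow, coeff_zero_eq_constantCoeff_apply,
      coeff_zero_eq_constantCoeff_apply, map_pow constantCoeff g (K + 1)]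
    simp only [Nat.add_sub_cancel]
    push_cast
    have h1 : 0 ≤ (K + 1 : R) * constantCoeff g ^ K * coeff 1 g ^ 2 := by positivity
    linear_combination mul_le_mul_of_nonneg_left ih hg + h1

theorem coeff_eq_sum_of_mul_one_sub_X_mul_eq_derivative {R : Type*} [Field R] [CharZero R]
    {T g : R⟦X⟧} (hT : T * (1 - X * g) = d⁄dX R (X * g)) (k : ℕ) :
    coeff k T = ∑ K ∈ range (k + 1), (k + 1) / (K + 1) * coeff (k - K) (g ^ (K + 1)) := by
  -- `T = (X g)' ∑ (X g)^K` and `(X g)' (X g)^K = ((X g)^(K + 1))' / (K + 1)`.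
  set h := X * g
  have hgeom : T * (1 - h ^ (k + 1)) = d⁄dX R h * ∑ K ∈ range (k + 1), h ^ K := by
    rw [← mul_neg_geom_sum, ← mul_assoc, hT]
  have htail : coeff k (T * h ^ (k + 1)) = 0 := by
    rw [mul_pow, mul_left_comm, coeff_X_pow_mul', if_neg (by omega)]
  have hterm : ∀ K ∈ range (k + 1),
      coeff k (d⁄dX R h * h ^ K) = (k + 1) / (K + 1) * coeff (k - K) (g ^ (K + 1)) := by
    intro K hK
    have hd := congrArg (coeff k) (derivative_pow h (K + 1))
    rw [coeff_derivative, Nat.add_sub_cancel, mul_assoc, ← map_natCast (C (R := R)), coeff_C_mul,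
      mul_pow, coeff_X_pow_mul', if_pos (by simp at hK; omega), Nat.add_sub_add_right] at hd
    rw [mul_comm, div_mul_eq_mul_div, eq_div_iff (Nat.cast_add_one_ne_zero K)]
    push_cast at hd
    linear_combination -hd
  calc coeff k T = coeff k (T * (1 - h ^ (k + 1))) := by
        rw [mul_sub, mul_one, map_sub, htail, sub_zero]
    _ = ∑ K ∈ range (k + 1), coeff k (d⁄dX R h * h ^ K) := by rw [hgeom, mul_sum, map_sum]
    _ = _ := sum_congr rfl hterm

end PowerSeries

namespace Matrix

variable {ι : Type*}

local notation "𝟙" => (of fun _ _ => 1 : Matrix ι ι ℝ)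

theorem IsSymm.two_smul_sub_allOnes {W : Matrix ι ι ℝ} (hW : W.IsSymm) : ((2 : ℝ) • W - 𝟙).IsSymm :=
  (hW.smul 2).sub (IsSymm.ext fun _ _ => rfl)

variable [Fintype ι]

theorem allOnes_mul_mul_allOnes (M : Matrix ι ι ℝ) :
    𝟙 * M * 𝟙 = ((fun _ => 1) ⬝ᵥ M *ᵥ (fun _ => 1)) • 𝟙 := by
  ext i j
  simp [mul_apply, dotProduct, mulVec, sum_comm (γ := ι)]

theorem trace_mul_allOnes_mul (A B : Matrix ι ι ℝ) :
    trace (A * 𝟙 * B) = (fun _ => 1) ⬝ᵥ (B * A) *ᵥ (fun _ => 1) := by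
  have hJ : 𝟙 = vecMulVec (fun _ => 1) (fun _ => 1) := by ext; simp [vecMulVec_apply]
  rw [hJ, mul_vecMulVec, vecMulVec_mul, trace_vecMulVec, dotProduct_comm, ← dotProduct_mulVec,
    mulVec_mulVec]

variable [DecidableEq ι] (V : Matrix ι ι ℝ)

def walkSum (a : ℕ) : ℝ := (fun _ => 1) ⬝ᵥ (V ^ a) *ᵥ (fun _ => 1)

noncomputable def walkSeries : ℝ⟦X⟧ := PowerSeries.mk (walkSum V)

theorem walkSum_zero : walkSum V 0 = Fintype.card ι := by
  simp [walkSum, dotProduct]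

theorem trace_allOnes_add_pow_succ_sub_eq_sum (q : ℕ) :
    trace ((𝟙 + V) ^ (q + 1)) - trace (V ^ (q + 1)) =
      ∑ p ∈ antidiagonal q, trace (V ^ p.1 * 𝟙 * (𝟙 + V) ^ p.2) := by
  rw [add_pow_succ_eq_pow_succ_add_sum, trace_add, trace_sum, add_sub_cancel_left]

theorem trace_pow_mul_allOnes_mul_pow_succ (a b : ℕ) :
    trace (V ^ a * 𝟙 * (𝟙 + V) ^ (b + 1)) = walkSum V (b + 1 + a) +
      ∑ p ∈ antidiagonal b, walkSum V p.1 * trace (V ^ a * 𝟙 * (𝟙 + V) ^ p.2) := by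
  rw [add_pow_succ_eq_pow_succ_add_sum, mul_add, trace_add, trace_mul_allOnes_mul, ← pow_add,
    mul_sum, trace_sum]
  refine congrArg _ (sum_congr rfl fun p _ => ?_)
  have h : V ^ a * 𝟙 * (V ^ p.1 * 𝟙 * (𝟙 + V) ^ p.2) =
      V ^ a * (𝟙 * V ^ p.1 * 𝟙) * (𝟙 + V) ^ p.2 := by
    simp only [mul_assoc]
  rw [h, allOnes_mul_mul_allOnes, mul_smul_comm, smul_mul_assoc, trace_smul, smul_eq_mul, walkSum]

theorem trace_allOnes_add_pow_sub_recursion (k : ℕ) :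
    trace ((𝟙 + V) ^ (k + 2)) - trace (V ^ (k + 2)) = (k + 2) * walkSum V (k + 1) +
      ∑ p ∈ antidiagonal k,
        walkSum V p.1 * (trace ((𝟙 + V) ^ (p.2 + 1)) - trace (V ^ (p.2 + 1))) := by
  have hy0 : trace (V ^ (k + 1) * 𝟙 * (𝟙 + V) ^ 0) = walkSum V (k + 1) := by
    rw [trace_mul_allOnes_mul, pow_zero, one_mul, walkSum]
  have hwalk : ∑ p ∈ antidiagonal k, walkSum V (p.2 + 1 + p.1) = (k + 1) * walkSum V (k + 1) := by
    rw [sum_congr rfl fun p hp => by rw [show p.2 + 1 + p.1 = k + 1 by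
      have := HasAntidiagonal.mem_antidiagonal.1 hp; omega], sum_const, Nat.card_antidiagonal,
      nsmul_eq_mul]
    push_cast; ring
  rw [trace_allOnes_add_pow_succ_sub_eq_sum V (k + 1), Nat.sum_antidiagonal_succ', hy0]
  simp only [trace_pow_mul_allOnes_mul_pow_succ, sum_add_distrib, hwalk,
    trace_allOnes_add_pow_succ_sub_eq_sum, mul_sum]
  rw [Nat.sum_antidiagonal_sum_antidiagonal_comm k
    fun a c e => walkSum V c * trace (V ^ a * 𝟙 * (𝟙 + V) ^ e)]
  ring

theorem mk_trace_allOnes_add_pow_succ_sub_mul :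
    PowerSeries.mk (fun k => trace ((𝟙 + V) ^ (k + 1)) - trace (V ^ (k + 1))) *
      (1 - X * walkSeries V) = d⁄dX ℝ (X * walkSeries V) := by
  ext (_ | k)
  · simp [walkSeries, walkSum_zero, trace, sum_add_distrib]
  · rw [mul_sub, mul_one, map_sub, mul_left_comm, coeff_succ_X_mul, mul_comm, coeff_mul,
      coeff_derivative, coeff_succ_X_mul, walkSeries, coeff_mk, coeff_mk,
      trace_allOnes_add_pow_sub_recursion]
    simp only [coeff_mk]
    push_cast
    ring

theorem trace_allOnes_add_pow_succ_sub_eq_sum_coeff (k : ℕ) :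
    trace ((𝟙 + V) ^ (k + 1)) - trace (V ^ (k + 1)) =
      ∑ K ∈ range (k + 1), (k + 1) / (K + 1) * coeff (k - K) (walkSeries V ^ (K + 1)) := by
  simpa using
    coeff_eq_sum_of_mul_one_sub_X_mul_eq_derivative (mk_trace_allOnes_add_pow_succ_sub_mul V) k

theorem walkSeries_neg : walkSeries (-V) = rescale (-1) (walkSeries V) := by
  ext a
  rw [walkSeries, walkSeries, coeff_mk, coeff_rescale, coeff_mk, walkSum, walkSum,
    ← neg_one_smul ℝ V, smul_pow, smul_mulVec, dotProduct_smul, smul_eq_mul]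

theorem IsSymm.walkSum_add {V : Matrix ι ι ℝ} (hV : V.IsSymm) (a b : ℕ) :
    walkSum V (a + b) = ∑ x, (V ^ a *ᵥ fun _ => 1) x * (V ^ b *ᵥ fun _ => 1) x := by
  rw [walkSum, pow_add, ← mulVec_mulVec, dotProduct_mulVec, ← mulVec_transpose, (hV.pow a).eq]
  rfl

theorem IsSymm.walkSum_two_nonneg {V : Matrix ι ι ℝ} (hV : V.IsSymm) : 0 ≤ walkSum V 2 := by
  rw [hV.walkSum_add 1 1]
  exact sum_nonneg fun _ _ => mul_self_nonneg _

theorem IsSymm.trace_pow_add_trace_neg_pow_nonneg {V : Matrix ι ι ℝ} (hV : V.IsSymm) (m : ℕ) :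
    0 ≤ trace (V ^ m) + trace ((-V) ^ m) := by
  rcases Nat.even_or_odd m with ⟨r, rfl⟩ | hodd
  · rw [Even.neg_pow ⟨r, rfl⟩, ← two_mul, pow_add]
    have := (posSemidef_conjTranspose_mul_self (V ^ r)).trace_nonneg
    rw [conjTranspose_eq_transpose_of_trivial, (hV.pow r).eq] at this
    positivity
  · rw [hodd.neg_pow, trace_neg, add_neg_cancel]

theorem trace_allOnes_add_pow_add_trace_allOnes_sub_pow (k : ℕ) :
    trace ((𝟙 + V) ^ (k + 1)) + trace ((𝟙 - V) ^ (k + 1)) =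
      trace (V ^ (k + 1)) + trace ((-V) ^ (k + 1)) + ∑ K ∈ range (k + 1),
        (k + 1) / (K + 1) * ((1 + (-1) ^ (k - K)) * coeff (k - K) (walkSeries V ^ (K + 1))) := by
  have hplus := trace_allOnes_add_pow_succ_sub_eq_sum_coeff V k
  have hminus := trace_allOnes_add_pow_succ_sub_eq_sum_coeff (-V) k
  simp only [walkSeries_neg, ← map_pow, coeff_rescale, ← sub_eq_add_neg] at hminus
  simp only [one_add_mul, mul_add, sum_add_distrib]
  linarith

theorem IsSymm.two_mul_card_pow_add_le_trace_add_trace {V : Matrix ι ι ℝ} (hV : V.IsSymm)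
    (k : ℕ) :
    2 * (Fintype.card ι : ℝ) ^ (k + 3) + 2 * (k + 3) * (Fintype.card ι) ^ k * walkSum V 2 ≤
      trace ((𝟙 + V) ^ (k + 3)) + trace ((𝟙 - V) ^ (k + 3)) := by
  set n := (Fintype.card ι : ℝ)
  set f : ℕ → ℝ := fun K => ((k + 2 : ℕ) + 1) / (K + 1) *
    ((1 + (-1) ^ (k + 2 - K)) * coeff (k + 2 - K) (walkSeries V ^ (K + 1)))
  have hf_nonneg : ∀ K ∈ range (k + 3), 0 ≤ f K := by
    intro K _
    rcases Nat.even_or_odd (k + 2 - K) with he | ho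
    · simp only [f, he.neg_one_pow]
      exact mul_nonneg (by positivity) (mul_nonneg (by norm_num)
        (coeff_mk_pow_nonneg_of_even _ hV.walkSum_add _ he))
    · simp [f, ho.neg_one_pow]
  have hg0 : constantCoeff (walkSeries V) = n := by
    rw [← coeff_zero_eq_constantCoeff_apply, walkSeries, coeff_mk, walkSum_zero]
  have hf_top : f (k + 2) = 2 * n ^ (k + 3) := by
    simp only [f, Nat.sub_self, pow_zero, coeff_zero_eq_constantCoeff_apply, map_pow, hg0]
    push_cast
    field_simp
    ring
  have hf_two : 2 * (k + 3) * n ^ k * walkSum V 2 ≤ f k := by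
    have h := mul_pow_mul_coeff_two_le_coeff_two_pow (g := walkSeries V)
      (hg0 ▸ Nat.cast_nonneg (Fintype.card ι)) k
    rw [hg0, show coeff 2 (walkSeries V) = walkSum V 2 from coeff_mk _ _] at h
    simp only [f, show k + 2 - k = 2 by omega, show (1 + (-1 : ℝ) ^ 2) = 2 by norm_num]
    push_cast
    calc 2 * (k + 3) * n ^ k * walkSum V 2
        = (k + 2 + 1) / (k + 1) * (2 * ((k + 1) * n ^ k * walkSum V 2)) := by field_simp; ring
      _ ≤ _ := by gcongr
  have hpair : f (k + 2) + f k ≤ ∑ K ∈ range (k + 3), f K := by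
    rw [← sum_pair (show k + 2 ≠ k by omega)]
    exact sum_le_sum_of_subset_of_nonneg (by intro K; simp; omega) fun K hK _ => hf_nonneg K hK
  rw [trace_allOnes_add_pow_add_trace_allOnes_sub_pow V (k + 2)]
  linarith [hV.trace_pow_add_trace_neg_pow_nonneg (k + 3)]

theorem IsSymm.two_mul_card_pow_add_le_two_pow_mul_trace_add_trace {W : Matrix ι ι ℝ}
    (hW : W.IsSymm) (k : ℕ) :
    2 * (Fintype.card ι : ℝ) ^ (k + 3) +
        2 * (k + 3) * (Fintype.card ι) ^ k * walkSum ((2 : ℝ) • W - 𝟙) 2 ≤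
      2 ^ (k + 3) * (trace (W ^ (k + 3)) + trace ((𝟙 - W) ^ (k + 3))) := by
  have h := hW.two_smul_sub_allOnes.two_mul_card_pow_add_le_trace_add_trace k
  rwa [show 𝟙 + ((2 : ℝ) • W - 𝟙) = (2 : ℝ) • W by abel,
    show 𝟙 - ((2 : ℝ) • W - 𝟙) = (2 : ℝ) • (𝟙 - W) by module, smul_pow, smul_pow, trace_smul,
    trace_smul, smul_eq_mul, smul_eq_mul, ← mul_add] at h

end Matrix

open Matrix

theorem cycle_stability_general (n : ℕ) (hn : 0 < n) (m : ℕ) (hm : 3 ≤ m) (ε : ℝ)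
    (W : Matrix (Fin n) (Fin n) ℝ) (hW : W.IsSymm)
    (hle : (W ^ m).trace / (n : ℝ) ^ m +
        (((Matrix.of fun _ _ => (1 : ℝ)) - W) ^ m).trace / (n : ℝ) ^ m ≤
      (2 : ℝ) ^ (1 - (m : ℤ)) * (1 + ε)) :
    ((fun _ => (1 : ℝ)) ⬝ᵥ
        (((2 : ℝ) • W - Matrix.of fun _ _ => (1 : ℝ)) ^ 2).mulVec (fun _ => (1 : ℝ))) /
        (n : ℝ) ^ 3 ≤ ε / ((m : ℝ) - 1) := by
  obtain ⟨k, rfl⟩ : ∃ k, m = k + 3 := ⟨m - 3, by omega⟩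
  set s₂ := walkSum ((2 : ℝ) • W - of fun _ _ => 1) 2
  have hs₂ : 0 ≤ s₂ := hW.two_smul_sub_allOnes.walkSum_two_nonneg
  have hn' : (0 : ℝ) < n := by exact_mod_cast hn
  have hcycles := hW.two_mul_card_pow_add_le_two_pow_mul_trace_add_trace k
  rw [Fintype.card_fin] at hcycles
  rw [← add_div, div_le_iff₀ (by positivity), zpow_sub₀ two_ne_zero, zpow_one, zpow_natCast] at hle
  have hdensity : 2 ^ (k + 3) * ((W ^ (k + 3)).trace + (((of fun _ _ => 1) - W) ^ (k + 3)).trace) ≤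
      2 * (1 + ε) * n ^ (k + 3) :=
    calc _ ≤ 2 ^ (k + 3) * (2 / 2 ^ (k + 3) * (1 + ε) * n ^ (k + 3)) := by gcongr
      _ = _ := by field_simp
  have hkey : (k + 3) * s₂ ≤ ε * n ^ 3 := by
    have h := hcycles.trans hdensity
    rw [pow_add] at h
    refine le_of_mul_le_mul_left ?_ (pow_pos hn' k)
    linarith
  show s₂ / (n : ℝ) ^ 3 ≤ ε / ((k + 3 : ℕ) - 1)
  rw [div_le_div_iff₀ (by positivity) (by push_cast; linarith)]
  push_cast
  linarith

/-- Matrix form of the stability theorem for cycles: if the monochromatic cycle density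
is within a factor `1+ε` of the random bound `2^{1−m}`, then `U = 2W − J` satisfies
`(1ᵀ U² 1)/n³ ≤ ε/(m−1)`. -/
theorem cycle_stability (n : ℕ) (hn : 0 < n) (m : ℕ) (hm : 3 ≤ m) (ε : ℝ) (hε : 0 ≤ ε)
    (W : Matrix (Fin n) (Fin n) ℝ) (hW : W.IsSymm)
    (hW01 : ∀ i j, W i j ∈ Set.Icc (0 : ℝ) 1)
    (hle : (W ^ m).trace / (n : ℝ) ^ m +
        (((Matrix.of fun _ _ => (1 : ℝ)) - W) ^ m).trace / (n : ℝ) ^ m ≤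
      (2 : ℝ) ^ (1 - (m : ℤ)) * (1 + ε)) :
    ((fun _ => (1 : ℝ)) ⬝ᵥ
        (((2 : ℝ) • W - Matrix.of fun _ _ => (1 : ℝ)) ^ 2).mulVec (fun _ => (1 : ℝ))) /
        (n : ℝ) ^ 3 ≤ ε / ((m : ℝ) - 1) :=
  cycle_stability_general n hn m hm ε W hW hle
end
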